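/- arXiv:2409.00870 — 4 statements merged into one kernel-verified Lean document; each statement's English description precedes it below -/
import Mathlib

section
/- Let θ be an almost Billhardt congruence on an inverse semigroup S, and let η: Ker θ → E(S/θ) be the restriction of the natural map θ^♮. Then the normal extension (S,θ) is embeddable, as a normal extension, in Houghton's wreath product of Ker θ by S/θ along η, i.e., in the full restricted semidirect product P^η_{Ker θ, S/θ}⋊(S/θ) equipped with the congruence induced by its second projection: there is an injective homomorphism ψ: S → P^η_{Ker θ,S/θ}⋊(S/θ) with ψ(Ker θ) contained in the Kernel of ker π₂ and s θ s' ⇔ ψ(s) (ker π₂) ψ(s'). -/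
/-- An inverse semigroup: a semigroup in which every element `a` has a unique
inverse `a⁻¹` satisfying `a * a⁻¹ * a = a` and `a⁻¹ * a * a⁻¹ = a⁻¹`. -/
class InverseSemigroup (S : Type*) extends Semigroup S, Inv S where
  mul_inv_mul : ∀ a : S, a * a⁻¹ * a = a
  inv_mul_inv : ∀ a : S, a⁻¹ * a * a⁻¹ = a⁻¹
  inv_unique : ∀ {a b : S}, a * b * a = a → b * a * b = b → b = a⁻¹

namespace InverseSemigroup

variable {S : Type*} [InverseSemigroup S]

lemma inv_inv' (a : S) : a⁻¹⁻¹ = a :=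
  (inv_unique (inv_mul_inv a) (mul_inv_mul a)).symm

lemma idem_inv {e : S} (he : e * e = e) : e⁻¹ = e :=
  (inv_unique (a := e) (b := e) (by rw [he, he]) (by rw [he, he])).symm

lemma fse_inv {e f : S} (he : e * e = e) (hf : f * f = f) :
    f * (e * f)⁻¹ * e = (e * f)⁻¹ := by
  have he' : ∀ x : S, e * (e * x) = e * x := fun x => by rw [← mul_assoc, he]
  have hf' : ∀ x : S, f * (f * x) = f * x := fun x => by rw [← mul_assoc, hf]
  have h4 : e * (f * ((e * f)⁻¹ * (e * f))) = e * f := by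
    simpa only [mul_assoc] using mul_inv_mul (e * f)
  have h5 : (e * f)⁻¹ * (e * (f * (e * f)⁻¹)) = (e * f)⁻¹ := by
    simpa only [mul_assoc] using inv_mul_inv (e * f)
  apply inv_unique (a := e * f)
  · simp only [mul_assoc]
    simp only [hf', he']
    exact h4
  · simp only [mul_assoc]
    simp only [he', hf']
    rw [show (e * f)⁻¹ * (e * (f * ((e * f)⁻¹ * e)))
        = ((e * f)⁻¹ * (e * (f * (e * f)⁻¹))) * e by simp only [mul_assoc], h5]

lemma idem_mul_idem {e f : S} (he : e * e = e) (hf : f * f = f) :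
    (e * f) * (e * f) = e * f := by
  have hs : (e * f)⁻¹ = f * (e * f)⁻¹ * e := (fse_inv he hf).symm
  have h6 : (e * f)⁻¹ * ((e * f) * ((e * f)⁻¹ * e)) = (e * f)⁻¹ * e := by
    rw [show (e * f)⁻¹ * ((e * f) * ((e * f)⁻¹ * e))
        = ((e * f)⁻¹ * (e * f) * (e * f)⁻¹) * e by simp only [mul_assoc],
      inv_mul_inv]
  have h1 : (e * f)⁻¹ * (e * f)⁻¹ = (e * f)⁻¹ := by
    calc (e * f)⁻¹ * (e * f)⁻¹
        = (f * (e * f)⁻¹ * e) * (f * (e * f)⁻¹ * e) := by rw [← hs]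
      _ = f * ((e * f)⁻¹ * ((e * f) * ((e * f)⁻¹ * e))) := by
          simp only [mul_assoc]
      _ = f * ((e * f)⁻¹ * e) := by rw [h6]
      _ = (e * f)⁻¹ := by rw [← mul_assoc]; exact fse_inv he hf
  have h4 : e * f = (e * f)⁻¹ := (inv_inv' (e * f)).symm.trans (idem_inv h1)
  calc (e * f) * (e * f) = (e * f)⁻¹ * (e * f)⁻¹ := by rw [← h4]
    _ = (e * f)⁻¹ := h1
    _ = e * f := h4.symm

lemma idem_comm {e f : S} (he : e * e = e) (hf : f * f = f) : e * f = f * e := by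
  have he' : ∀ x : S, e * (e * x) = e * x := fun x => by rw [← mul_assoc, he]
  have hf' : ∀ x : S, f * (f * x) = f * x := fun x => by rw [← mul_assoc, hf]
  have hef := idem_mul_idem he hf
  have hfe := idem_mul_idem hf he
  have h1 : f * e = (e * f)⁻¹ := by
    apply inv_unique
    · simp only [mul_assoc, hf', he']
      simpa only [mul_assoc] using hef
    · simp only [mul_assoc, he', hf']
      simpa only [mul_assoc] using hfe
  rw [h1, idem_inv hef]

lemma ran_idem (t : S) : (t * t⁻¹) * (t * t⁻¹) = t * t⁻¹ := by
  calc (t * t⁻¹) * (t * t⁻¹) = (t * t⁻¹ * t) * t⁻¹ := by simp only [mul_assoc]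
    _ = t * t⁻¹ := by rw [mul_inv_mul]

lemma dom_idem (t : S) : (t⁻¹ * t) * (t⁻¹ * t) = t⁻¹ * t := by
  calc (t⁻¹ * t) * (t⁻¹ * t) = t⁻¹ * (t * t⁻¹ * t) := by simp only [mul_assoc]
    _ = t⁻¹ * t := by rw [mul_inv_mul]

lemma mul_inv_rev' (a b : S) : (a * b)⁻¹ = b⁻¹ * a⁻¹ := by
  symm
  apply inv_unique
  · calc a * b * (b⁻¹ * a⁻¹) * (a * b)
        = a * ((b * b⁻¹) * (a⁻¹ * a)) * b := by simp only [mul_assoc]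
      _ = a * ((a⁻¹ * a) * (b * b⁻¹)) * b := by
          rw [idem_comm (ran_idem b) (dom_idem a)]
      _ = (a * a⁻¹ * a) * (b * b⁻¹ * b) := by simp only [mul_assoc]
      _ = a * b := by rw [mul_inv_mul, mul_inv_mul]
  · calc b⁻¹ * a⁻¹ * (a * b) * (b⁻¹ * a⁻¹)
        = b⁻¹ * ((a⁻¹ * a) * (b * b⁻¹)) * a⁻¹ := by simp only [mul_assoc]
      _ = b⁻¹ * ((b * b⁻¹) * (a⁻¹ * a)) * a⁻¹ := by
          rw [idem_comm (dom_idem a) (ran_idem b)]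
      _ = (b⁻¹ * b * b⁻¹) * (a⁻¹ * a * a⁻¹) := by simp only [mul_assoc]
      _ = b⁻¹ * a⁻¹ := by rw [inv_mul_inv, inv_mul_inv]

lemma conj_idem {e : S} (he : e * e = e) (t : S) :
    (t * e * t⁻¹) * (t * e * t⁻¹) = t * e * t⁻¹ := by
  have h1 : e * (t⁻¹ * t) = t⁻¹ * t * e := idem_comm he (dom_idem t)
  calc (t * e * t⁻¹) * (t * e * t⁻¹)
      = t * ((e * (t⁻¹ * t)) * (e * t⁻¹)) := by simp only [mul_assoc]
    _ = t * ((t⁻¹ * t * e) * (e * t⁻¹)) := by rw [h1]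
    _ = (t * t⁻¹ * t) * ((e * e) * t⁻¹) := by simp only [mul_assoc]
    _ = t * e * t⁻¹ := by rw [mul_inv_mul, he, mul_assoc]

lemma mem_of_mem_mul_left {e f x : S} (he : e * e = e) (hf : f * f = f)
    (h : x * (e * f) = x) : x * e = x := by
  conv_lhs => rw [← h]
  calc x * (e * f) * e = x * (e * (f * e)) := by simp only [mul_assoc]
    _ = x * (e * (e * f)) := by rw [idem_comm hf he]
    _ = x * (e * f) := by rw [← mul_assoc e e f, he]
    _ = x := h

lemma mem_of_mem_mul_right {e f x : S} (hf : f * f = f)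
    (h : x * (e * f) = x) : x * f = x := by
  conv_lhs => rw [← h]
  calc x * (e * f) * f = x * (e * (f * f)) := by simp only [mul_assoc]
    _ = x * (e * f) := by rw [hf]
    _ = x := h

lemma mem_mul_of_conj {e x : S} (he : e * e = e) (t : S)
    (h : x * (t * e * t⁻¹) = x) : (x * t) * e = x * t := by
  have h1 : x * t = x * (t * (e * (t⁻¹ * t))) := by
    conv_lhs => rw [← h]
    simp only [mul_assoc]
  calc (x * t) * e = x * (t * (e * (t⁻¹ * t))) * e := by rw [← h1]
    _ = x * (t * ((e * (t⁻¹ * t)) * e)) := by simp only [mul_assoc]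
    _ = x * (t * ((t⁻¹ * t) * (e * e))) := by
        rw [idem_comm he (dom_idem t), mul_assoc]
    _ = x * (t * (e * (t⁻¹ * t))) := by rw [he, idem_comm (dom_idem t) he]
    _ = x * t := h1.symm

end InverseSemigroup

/-- The set of idempotents `E(T)` of a `Mul`-structure. -/
def idemSet (T : Type*) [Mul T] : Set T := {e | e * e = e}

/-- `ran t = t * t⁻¹`. -/
def iran {T : Type*} [Mul T] [Inv T] (t : T) : T := t * t⁻¹

/-- `dom t = t⁻¹ * t`. -/
def idom {T : Type*} [Mul T] [Inv T] (t : T) : T := t⁻¹ * t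

/-- The natural partial order: `a ≤ b` iff `a = e * b` for some idempotent `e`. -/
def nle {T : Type*} [Mul T] (a b : T) : Prop := ∃ e ∈ idemSet T, a = e * b

/-- `b` is an inverse of `a`. -/
def IsInvPair {T : Type*} [Mul T] (a b : T) : Prop := a * b * a = a ∧ b * a * b = b

/-- An action of `T` on `K` by endomorphisms. -/
def IsAction {K T : Type*} [Mul K] [Mul T] (act : T → K → K) : Prop :=
  (∀ t a b, act t (a * b) = act t a * act t b) ∧
  (∀ t u a, act (t * u) a = act t (act u a))

/-- `ε : K → T` is a (surjective) homomorphism from `K` onto the semilattice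
of idempotents `E(T)` of `T`. -/
def IsSurjHomOntoE {K T : Type*} [Mul K] [Mul T] (ε : K → T) : Prop :=
  (∀ a b, ε (a * b) = ε a * ε b) ∧ (∀ a, ε a ∈ idemSet T) ∧
  (∀ e ∈ idemSet T, ∃ a, ε a = e)

/-- Condition (AFR): `e · a = a` iff `ε a ≤ e`, for all `a ∈ K`, `e ∈ E(T)`. -/
def AFR {K T : Type*} [Mul K] [Mul T] (act : T → K → K) (ε : K → T) : Prop :=
  ∀ (a : K), ∀ e ∈ idemSet T, (act e a = a ↔ nle (ε a) e)

/-- The carrier of the λ-semidirect product `K ⋊^λ T`: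
`{(a,t) ∈ K × T : a = ran(t) · a}`. -/
def lsdSet {K T : Type*} [Mul K] [Mul T] [Inv T] (act : T → K → K) :
    Set (K × T) := {p | act (iran p.2) p.1 = p.1}

/-- The multiplication of the λ-semidirect product:
`(a,t)(b,u) = ((ran(tu) · a)(t · b), tu)`. -/
def lsdMul {K T : Type*} [Mul K] [Mul T] [Inv T] (act : T → K → K)
    (p q : K × T) : K × T :=
  (act (iran (p.2 * q.2)) p.1 * act p.2 q.1, p.2 * q.2)

/-- The carrier of the full restricted semidirect product `K ⋊ T`:
`{(a,t) ∈ K × T : ε a = ran t}`. -/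
def rsdSet {K T : Type*} [Mul T] [Inv T] (ε : K → T) : Set (K × T) :=
  {p | ε p.1 = iran p.2}

/-- The multiplication of the full restricted semidirect product:
`(a,t)(b,u) = (a (t · b), tu)`. -/
def rsdMul {K T : Type*} [Mul K] [Mul T] (act : T → K → K)
    (p q : K × T) : K × T :=
  (p.1 * act p.2 q.1, p.2 * q.2)

/-- The Kernel of the congruence `ker π₂` (equality of second components) on a
subset `C` of a product, with multiplication `m`: all elements of `C` that are
`(ker π₂)`-related to an idempotent of `C`. -/
def pi2Kernel {X Y : Type*} (m : X × Y → X × Y → X × Y) (C : Set (X × Y)) :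
    Set (X × Y) :=
  {p | p ∈ C ∧ ∃ q ∈ C, m q q = q ∧ q.2 = p.2}

/-- A bitranslation of a semigroup `S`: a linked pair `(l, r)` of a left
translation and a right translation, written `ω s := l s`, `s ω := r s`. -/
@[ext]
structure Bitrans (S : Type*) [Mul S] where
  l : S → S
  r : S → S
  l_mul : ∀ s t : S, l (s * t) = l s * t
  r_mul : ∀ s t : S, r (s * t) = s * r t
  linked : ∀ s t : S, s * l t = r s * t

namespace Bitrans

variable {S : Type*} [Mul S]

/-- Product of bitranslations: `(ωω')s = ω(ω's)` and `s(ωω') = (sω)ω'`. -/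
instance : Mul (Bitrans S) where
  mul ω ω' :=
    { l := fun s => ω.l (ω'.l s)
      r := fun s => ω'.r (ω.r s)
      l_mul := fun s t => by
        show ω.l (ω'.l (s * t)) = ω.l (ω'.l s) * t
        rw [ω'.l_mul, ω.l_mul]
      r_mul := fun s t => by
        show ω'.r (ω.r (s * t)) = s * ω'.r (ω.r t)
        rw [ω.r_mul, ω'.r_mul]
      linked := fun s t => by
        show s * ω.l (ω'.l t) = ω'.r (ω.r s) * t
        rw [ω.linked, ω'.linked] }

/-- The translational hull `Ω(S)` (all bitranslations) is a semigroup. -/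
instance : Semigroup (Bitrans S) where
  mul_assoc a b c := by ext s <;> rfl

end Bitrans

/-- The inner bitranslation `π_s` induced by `s`. -/
def innerBitrans {S : Type*} [Semigroup S] (s : S) : Bitrans S where
  l := fun x => s * x
  r := fun x => x * s
  l_mul := fun x y => (mul_assoc s x y).symm
  r_mul := fun x y => mul_assoc x y s
  linked := fun x y => (mul_assoc x s y).symm

/-- `Π(S)`, the set of inner bitranslations of `S`. -/
def innerSet (S : Type*) [Semigroup S] : Set (Bitrans S) :=
  Set.range (innerBitrans (S := S))

/-- A bitranslation of `S` respects the congruence `θ`. -/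
def RespectsCon {S : Type*} [Mul S] (θ : Con S) (ω : Bitrans S) : Prop :=
  ∀ a b : S, θ a b → θ (ω.l a) (ω.l b) ∧ θ (ω.r a) (ω.r b)

/-- The bitranslation of `S/θ` induced by `ω` is the inner bitranslation
induced by some `u ∈ S/θ`. -/
def InducedInnerCon {S : Type*} [Mul S] (θ : Con S) (ω : Bitrans S) : Prop :=
  ∃ u : θ.Quotient, ∀ s : S,
    ((ω.l s : S) : θ.Quotient) = u * (s : θ.Quotient) ∧
    ((ω.r s : S) : θ.Quotient) = (s : θ.Quotient) * u

/-- The translational hull `Ω(S, θ)` of the normal extension `(S, θ)`: all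
bitranslations of `S` respecting `θ` whose induced bitranslation on `S/θ`
is inner. -/
def OmegaNE {S : Type*} [Mul S] (θ : Con S) : Set (Bitrans S) :=
  {ω | RespectsCon θ ω ∧ InducedInnerCon θ ω}

/-- The congruence `Ω(θ)` on `Ω(S, θ)`: `ω Ω(θ) ω'` iff `ωs θ ω's` and
`sω θ sω'` for every `s ∈ S`. -/
def OmegaCon {S : Type*} [Mul S] (θ : Con S) (ω ω' : Bitrans S) : Prop :=
  ∀ s : S, θ (ω.l s) (ω'.l s) ∧ θ (ω.r s) (ω'.r s)

/-- The natural partial order on the inverse semigroup `Ω(S, θ)`: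
`x ≤ y` iff `x = e * y` for some idempotent `e` of `Ω(S, θ)`. -/
def OmegaLe {S : Type*} [Mul S] (θ : Con S) (x y : Bitrans S) : Prop :=
  ∃ e ∈ OmegaNE θ, e * e = e ∧ x = e * y

/-- The generating set `Π(S) ∪ ξ(S/θ)` of the inverse subsemigroup `S̄`
(together with the inverses of the elements `ξ(t)`). -/
def SbarGen {S : Type*} [Semigroup S] (θ : Con S)
    (ξ : θ.Quotient → Bitrans S) : Set (Bitrans S) :=
  innerSet S ∪ Set.range ξ ∪ {ω | ∃ t : θ.Quotient, IsInvPair (ξ t) ω}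

/-- The inverse subsemigroup `S̄` of `Ω(S,θ)` generated by `Π(S) ∪ ξ(S/θ)`. -/
def Sbar {S : Type*} [Semigroup S] (θ : Con S)
    (ξ : θ.Quotient → Bitrans S) : Subsemigroup (Bitrans S) :=
  Subsemigroup.closure (SbarGen θ ξ)

/-- `ξ : S/θ → Ω(S,θ)` is an almost Billhardt transversal to `θ`:
(B1) `(ξ t)^↓` is the inner bitranslation of `S/θ` induced by `t`, and
(B2) `ξ(t)⁻¹ ξ(t) ≥ ω⁻¹ ω` for every `ω ∈ S̄ \ ξ(S/θ)` with
`ω^↓ = ω_t^{S/θ}`. -/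
def IsAlmostBillhardt {S : Type*} [Semigroup S] (θ : Con S)
    (ξ : θ.Quotient → Bitrans S) : Prop :=
  -- `ξ` maps into `Ω(S,θ)`
  (∀ t : θ.Quotient, RespectsCon θ (ξ t)) ∧
  -- (B1)
  (∀ (t : θ.Quotient) (s : S),
      (((ξ t).l s : S) : θ.Quotient) = t * (s : θ.Quotient) ∧
      (((ξ t).r s : S) : θ.Quotient) = (s : θ.Quotient) * t) ∧
  -- (B2)
  (∀ ω ∈ Sbar θ ξ, ω ∉ Set.range ξ →
      ∀ t : θ.Quotient,
        (∀ s : S, ((ω.l s : S) : θ.Quotient) = t * (s : θ.Quotient) ∧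
            ((ω.r s : S) : θ.Quotient) = (s : θ.Quotient) * t) →
        ∀ ξi ωi : Bitrans S, IsInvPair (ξ t) ξi → IsInvPair ω ωi →
          OmegaLe θ (ωi * ω) (ξi * ξ t))

/-- The Kernel of the congruence `θ`: all elements `θ`-related to an
idempotent. -/
def KerCon {S : Type*} [Mul S] (θ : Con S) : Set S :=
  {s | ∃ e : S, e * e = e ∧ θ s e}

section ConQuotient

open InverseSemigroup

variable {S : Type*} [InverseSemigroup S] (θ : Con S)

/-- Lallement's lemma for inverse semigroups: every idempotent `θ`-class
contains an idempotent. -/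
lemma lallement {c : S} (h : θ (c * c) c) : ∃ e : S, e * e = e ∧ θ c e := by
  refine ⟨c * (c * c)⁻¹ * c, ?_, ?_⟩
  · calc (c * (c * c)⁻¹ * c) * (c * (c * c)⁻¹ * c)
        = c * ((c * c)⁻¹ * (c * c) * (c * c)⁻¹) * c := by
          simp only [mul_assoc]
      _ = c * (c * c)⁻¹ * c := by rw [inv_mul_inv]
  · have h1 : θ (c * (c * c)⁻¹ * c) ((c * c) * (c * c)⁻¹ * (c * c)) :=
      θ.mul (θ.mul (θ.symm h) (θ.refl (c * c)⁻¹)) (θ.symm h)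
    rw [mul_inv_mul (c * c)] at h1
    exact θ.symm (θ.trans h1 h)

/-- Idempotents of the quotient `S/θ` commute (via Lallement's lemma). -/
lemma quot_idem_comm (u v : θ.Quotient) (hu : u * u = u) (hv : v * v = v) :
    u * v = v * u := by
  induction u using Con.induction_on with
  | H c =>
    induction v using Con.induction_on with
    | H d =>
      obtain ⟨e, he, hce⟩ := lallement θ (θ.eq.1 hu)
      obtain ⟨f, hf, hdf⟩ := lallement θ (θ.eq.1 hv)
      calc ((c : θ.Quotient)) * (d : θ.Quotient)
          = ((c * d : S) : θ.Quotient) := rfl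
        _ = ((e * f : S) : θ.Quotient) := θ.eq.2 (θ.mul hce hdf)
        _ = ((f * e : S) : θ.Quotient) := by rw [idem_comm he hf]
        _ = ((d * c : S) : θ.Quotient) := (θ.eq.2 (θ.mul hdf hce)).symm
        _ = ((d : θ.Quotient)) * (c : θ.Quotient) := rfl

/-- Uniqueness of inverses in the quotient `S/θ`. -/
lemma quot_inv_unique {x y z : θ.Quotient} (h1 : x * y * x = x)
    (h2 : y * x * y = y) (h3 : x * z * x = x) (h4 : z * x * z = z) :
    y = z := by
  have hxy : (x * y) * (x * y) = x * y := by
    calc (x * y) * (x * y) = (x * y * x) * y := by simp only [mul_assoc]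
      _ = x * y := by rw [h1]
  have hyx : (y * x) * (y * x) = y * x := by
    calc (y * x) * (y * x) = (y * x * y) * x := by simp only [mul_assoc]
      _ = y * x := by rw [h2]
  have hxz : (x * z) * (x * z) = x * z := by
    calc (x * z) * (x * z) = (x * z * x) * z := by simp only [mul_assoc]
      _ = x * z := by rw [h3]
  have hzx : (z * x) * (z * x) = z * x := by
    calc (z * x) * (z * x) = (z * x * z) * x := by simp only [mul_assoc]
      _ = z * x := by rw [h4]
  have hy1 : y = y * x * z := by
    calc y = y * x * y := h2.symm
      _ = y * (x * z * x) * y := by rw [h3]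
      _ = y * ((x * z) * (x * y)) := by simp only [mul_assoc]
      _ = y * ((x * y) * (x * z)) := by rw [quot_idem_comm θ _ _ hxz hxy]
      _ = (y * x * y) * (x * z) := by simp only [mul_assoc]
      _ = y * (x * z) := by rw [h2]
      _ = y * x * z := by rw [mul_assoc]
  have hz1 : z = y * x * z := by
    calc z = z * x * z := h4.symm
      _ = z * (x * y * x) * z := by rw [h1]
      _ = ((z * x) * (y * x)) * z := by simp only [mul_assoc]
      _ = ((y * x) * (z * x)) * z := by rw [quot_idem_comm θ _ _ hzx hyx]
      _ = y * (x * (z * x * z)) := by simp only [mul_assoc]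
      _ = y * (x * z) := by rw [h4]
      _ = y * x * z := by rw [mul_assoc]
  exact hy1.trans hz1.symm

/-- Any congruence on an inverse semigroup preserves inverses. -/
lemma con_inv {a b : S} (h : θ a b) : θ a⁻¹ b⁻¹ := by
  have hab : ((a : S) : θ.Quotient) = ((b : S) : θ.Quotient) := θ.eq.2 h
  have h1 : ((a : S) : θ.Quotient) * ((a⁻¹ : S) : θ.Quotient)
      * ((a : S) : θ.Quotient) = ((a : S) : θ.Quotient) := by
    calc ((a : S) : θ.Quotient) * ((a⁻¹ : S) : θ.Quotient)
          * ((a : S) : θ.Quotient)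
        = ((a * a⁻¹ * a : S) : θ.Quotient) := rfl
      _ = ((a : S) : θ.Quotient) := by rw [mul_inv_mul]
  have h2 : ((a⁻¹ : S) : θ.Quotient) * ((a : S) : θ.Quotient)
      * ((a⁻¹ : S) : θ.Quotient) = ((a⁻¹ : S) : θ.Quotient) := by
    calc ((a⁻¹ : S) : θ.Quotient) * ((a : S) : θ.Quotient)
          * ((a⁻¹ : S) : θ.Quotient)
        = ((a⁻¹ * a * a⁻¹ : S) : θ.Quotient) := rfl
      _ = ((a⁻¹ : S) : θ.Quotient) := by rw [inv_mul_inv]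
  have h3 : ((a : S) : θ.Quotient) * ((b⁻¹ : S) : θ.Quotient)
      * ((a : S) : θ.Quotient) = ((a : S) : θ.Quotient) := by
    rw [hab]
    calc ((b : S) : θ.Quotient) * ((b⁻¹ : S) : θ.Quotient)
          * ((b : S) : θ.Quotient)
        = ((b * b⁻¹ * b : S) : θ.Quotient) := rfl
      _ = ((b : S) : θ.Quotient) := by rw [mul_inv_mul]
  have h4 : ((b⁻¹ : S) : θ.Quotient) * ((a : S) : θ.Quotient)
      * ((b⁻¹ : S) : θ.Quotient) = ((b⁻¹ : S) : θ.Quotient) := by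
    rw [hab]
    calc ((b⁻¹ : S) : θ.Quotient) * ((b : S) : θ.Quotient)
          * ((b⁻¹ : S) : θ.Quotient)
        = ((b⁻¹ * b * b⁻¹ : S) : θ.Quotient) := rfl
      _ = ((b⁻¹ : S) : θ.Quotient) := by rw [inv_mul_inv]
  exact θ.eq.1 (quot_inv_unique θ h1 h2 h3 h4)

/-- The inverse operation on the quotient `S/θ`. -/
instance : Inv θ.Quotient :=
  ⟨Quotient.map' (fun a => a⁻¹) (fun _ _ h => con_inv θ h)⟩

lemma quot_inv_coe (a : S) : ((a : θ.Quotient))⁻¹ = ((a⁻¹ : S) : θ.Quotient) :=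
  rfl

/-- The quotient of an inverse semigroup by a congruence is an inverse
semigroup. -/
instance : InverseSemigroup θ.Quotient where
  mul_inv_mul x := by
    induction x using Con.induction_on with
    | H a =>
      rw [quot_inv_coe]
      show ((a * a⁻¹ * a : S) : θ.Quotient) = ((a : S) : θ.Quotient)
      rw [mul_inv_mul]
  inv_mul_inv x := by
    induction x using Con.induction_on with
    | H a =>
      rw [quot_inv_coe]
      show ((a⁻¹ * a * a⁻¹ : S) : θ.Quotient) = ((a⁻¹ : S) : θ.Quotient)
      rw [inv_mul_inv]
  inv_unique {x y} h1 h2 := by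
    induction x using Con.induction_on with
    | H a =>
      rw [quot_inv_coe]
      have h3 : ((a : S) : θ.Quotient) * ((a⁻¹ : S) : θ.Quotient)
          * ((a : S) : θ.Quotient) = ((a : S) : θ.Quotient) := by
        calc ((a : S) : θ.Quotient) * ((a⁻¹ : S) : θ.Quotient)
              * ((a : S) : θ.Quotient)
            = ((a * a⁻¹ * a : S) : θ.Quotient) := rfl
          _ = ((a : S) : θ.Quotient) := by rw [mul_inv_mul]
      have h4 : ((a⁻¹ : S) : θ.Quotient) * ((a : S) : θ.Quotient)
          * ((a⁻¹ : S) : θ.Quotient) = ((a⁻¹ : S) : θ.Quotient) := by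
        calc ((a⁻¹ : S) : θ.Quotient) * ((a : S) : θ.Quotient)
              * ((a⁻¹ : S) : θ.Quotient)
            = ((a⁻¹ * a * a⁻¹ : S) : θ.Quotient) := rfl
          _ = ((a⁻¹ : S) : θ.Quotient) := by rw [inv_mul_inv]
      exact quot_inv_unique θ h1 h2 h3 h4

end ConQuotient

/-- An element of `P_{K,T}`: a function from a principal left ideal of `T`
into `K`.  The ideal `T·gen = {x | x * gen = x}` is recorded by its unique
idempotent generator `gen`, and `val` is the function defined on it. -/
structure PElem (K T : Type*) [Mul T] where
  gen : T
  idem : gen * gen = gen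
  val : {x : T // x * gen = x} → K

namespace PElem

open InverseSemigroup

variable {K T : Type*} [InverseSemigroup T]

/-- The pointwise multiplication `α ⊕ β` of `P_{K,T}`, defined on
`dom α ∩ dom β = T(ef)` by `(α ⊕ β)(x) = α(x) β(x)`. -/
def pmul [Mul K] (α β : PElem K T) : PElem K T where
  gen := α.gen * β.gen
  idem := idem_mul_idem α.idem β.idem
  val := fun x =>
    α.val ⟨x.1, mem_of_mem_mul_left α.idem β.idem x.2⟩ *
    β.val ⟨x.1, mem_of_mem_mul_right β.idem x.2⟩

/-- The pointwise inverse on `P_{K,T}`. -/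
def pinv [Inv K] (α : PElem K T) : PElem K T where
  gen := α.gen
  idem := α.idem
  val := fun x => (α.val x)⁻¹

/-- The action of `T` on `P_{K,T}`: `t · α : (dom α)t⁻¹ → K, x ↦ α(xt)`;
the ideal `(dom α)t⁻¹` has idempotent generator `t * α.gen * t⁻¹`. -/
def pact (t : T) (α : PElem K T) : PElem K T where
  gen := t * α.gen * t⁻¹
  idem := conj_idem α.idem t
  val := fun x => α.val ⟨x.1 * t, mem_mul_of_conj α.idem t x.2⟩

end PElem

/-- The principal left ideal `Tt` of `T` (note `x ∈ Tt` iff `x = y * t` for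
some `y`). -/
def lIdeal (T : Type*) [Mul T] (t : T) : Set T := {x | ∃ y : T, x = y * t}

/-- The carrier of Houghton's wreath product `K Wr^H T`:
`{(α, t) ∈ P_{K,T} × T : dom α = T t⁻¹}`. -/
def hwrSet (K T : Type*) [InverseSemigroup T] : Set (PElem K T × T) :=
  {p | {x : T | x * p.1.gen = x} = lIdeal T p.2⁻¹}

/-- The multiplication of Houghton's wreath product:
`(α, t)(β, u) = (α ⊕ (t · β), tu)`. -/
def hwrMul {K T : Type*} [Mul K] [InverseSemigroup T]
    (p q : PElem K T × T) : PElem K T × T :=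
  (PElem.pmul p.1 (PElem.pact p.2 q.1), p.2 * q.2)

/-- The Kernel `Ker θ` of the congruence `θ`, as a type (an inverse
subsemigroup of `S`). -/
def KerSub {S : Type*} [Mul S] (θ : Con S) : Type _ :=
  {s : S // ∃ e : S, e * e = e ∧ θ s e}

/-- `Ker θ` is closed under multiplication. -/
instance {S : Type*} [InverseSemigroup S] (θ : Con S) : Mul (KerSub θ) :=
  ⟨fun a b => ⟨a.1 * b.1, by
    obtain ⟨e, he, hae⟩ := a.2
    obtain ⟨f, hf, hbf⟩ := b.2
    exact ⟨e * f, InverseSemigroup.idem_mul_idem he hf, θ.mul hae hbf⟩⟩⟩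

/-- The restriction `η : Ker θ → E(S/θ)` of the natural map `θ^♮`. -/
def etaMap {S : Type*} [InverseSemigroup S] (θ : Con S) :
    KerSub θ → θ.Quotient :=
  fun a => ((a.1 : S) : θ.Quotient)

/-- The subset `P^η_{K,T} = {α ∈ P_{K,T} : α(x) ∈ K_{ran x}}` determined by a
normal extension triple `(K, η, T)`. -/
def Peta {K T : Type*} [Mul T] [Inv T] (η : K → T) : Set (PElem K T) :=
  {α | ∀ x : {x : T // x * α.gen = x}, η (α.val x) = iran x.1}

/-- The carrier of Houghton's wreath product of `K` by `T` along `η`, i.e. of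
the full restricted semidirect product `P^η_{K,T} ⋊ T`. -/
def hwrEtaSet {K T : Type*} [InverseSemigroup T] (η : K → T) :
    Set (PElem K T × T) :=
  {p | p.1 ∈ Peta η ∧ p.1.gen = iran p.2}

/-! ### Auxiliary material for the main theorem -/

section MyAux

open InverseSemigroup

variable {S : Type*} [InverseSemigroup S]

lemma my_right_mul_cancel {a b : S} (h : ∀ x : S, x * a = x * b) : a = b := by
  have ha : a = a * a⁻¹ * b := by rw [← h (a * a⁻¹)]; exact (mul_inv_mul a).symm
  have hb : b = b * b⁻¹ * a := by rw [h (b * b⁻¹)]; exact (mul_inv_mul b).symm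
  symm
  calc b = b * b⁻¹ * a := hb
    _ = b * b⁻¹ * (a * a⁻¹ * b) := by rw [← ha]
    _ = (b * b⁻¹) * (a * a⁻¹) * b := by simp only [mul_assoc]
    _ = (a * a⁻¹) * (b * b⁻¹) * b := by rw [idem_comm (ran_idem b) (ran_idem a)]
    _ = a * a⁻¹ * (b * b⁻¹ * b) := by simp only [mul_assoc]
    _ = a * a⁻¹ * b := by rw [mul_inv_mul]
    _ = a := ha.symm

lemma my_left_mul_cancel {a b : S} (h : ∀ x : S, a * x = b * x) : a = b := by
  have haa : a * (a⁻¹ * a) = a := by rw [← mul_assoc, mul_inv_mul]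
  have hbb : b * (b⁻¹ * b) = b := by rw [← mul_assoc, mul_inv_mul]
  have ha : a = b * (a⁻¹ * a) := by rw [← h (a⁻¹ * a), haa]
  have hb : b = a * (b⁻¹ * b) := by rw [h (b⁻¹ * b), hbb]
  calc a = b * (a⁻¹ * a) := ha
    _ = a * (b⁻¹ * b) * (a⁻¹ * a) := by rw [← hb]
    _ = a * ((b⁻¹ * b) * (a⁻¹ * a)) := by simp only [mul_assoc]
    _ = a * ((a⁻¹ * a) * (b⁻¹ * b)) := by rw [idem_comm (dom_idem b) (dom_idem a)]
    _ = (a * (a⁻¹ * a)) * (b⁻¹ * b) := by simp only [mul_assoc]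
    _ = a * (b⁻¹ * b) := by rw [haa]
    _ = b := hb.symm

lemma iran_mul_absorb {x u : S} (h : x * (u * u⁻¹) = x) :
    (x * u) * (x * u)⁻¹ = x * x⁻¹ := by
  rw [mul_inv_rev']
  calc x * u * (u⁻¹ * x⁻¹) = (x * (u * u⁻¹)) * x⁻¹ := by simp only [mul_assoc]
    _ = x * x⁻¹ := by rw [h]

lemma iran_mul_split (u v : S) :
    (u * v) * (u * v)⁻¹ = (u * u⁻¹) * (u * (v * v⁻¹) * u⁻¹) := by
  rw [mul_inv_rev']
  have h1 : u * u⁻¹ * (u * (v * v⁻¹) * u⁻¹)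
      = u * u⁻¹ * u * ((v * v⁻¹) * u⁻¹) := by simp only [mul_assoc]
  rw [h1, mul_inv_mul]
  simp only [mul_assoc]

end MyAux

namespace Bitrans

open InverseSemigroup

variable {S : Type*} [InverseSemigroup S]

lemma mul_l' (ω ω' : Bitrans S) (s : S) : (ω * ω').l s = ω.l (ω'.l s) := rfl

lemma mul_r' (ω ω' : Bitrans S) (s : S) : (ω * ω').r s = ω'.r (ω.r s) := rfl

/-- The inverse of a bitranslation of an inverse semigroup. -/
def bstar (ω : Bitrans S) : Bitrans S where
  l := fun a => (ω.r a⁻¹)⁻¹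
  r := fun a => (ω.l a⁻¹)⁻¹
  l_mul := fun s t => by
    show (ω.r (s * t)⁻¹)⁻¹ = (ω.r s⁻¹)⁻¹ * t
    rw [mul_inv_rev', ω.r_mul, mul_inv_rev', inv_inv']
  r_mul := fun s t => by
    show (ω.l (s * t)⁻¹)⁻¹ = s * (ω.l t⁻¹)⁻¹
    rw [mul_inv_rev', ω.l_mul, mul_inv_rev', inv_inv']
  linked := fun s t => by
    show s * (ω.r t⁻¹)⁻¹ = (ω.l s⁻¹)⁻¹ * t
    have h := ω.linked t⁻¹ s⁻¹
    calc s * (ω.r t⁻¹)⁻¹ = (ω.r t⁻¹ * s⁻¹)⁻¹ := by rw [mul_inv_rev', inv_inv']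
      _ = (t⁻¹ * ω.l s⁻¹)⁻¹ := by rw [← h]
      _ = (ω.l s⁻¹)⁻¹ * t := by rw [mul_inv_rev', inv_inv']

lemma bstar_bstar (ω : Bitrans S) : bstar (bstar ω) = ω := by
  refine Bitrans.ext ?_ ?_ <;> funext a
  · show ((ω.l a⁻¹⁻¹)⁻¹)⁻¹ = ω.l a
    rw [inv_inv', inv_inv']
  · show ((ω.r a⁻¹⁻¹)⁻¹)⁻¹ = ω.r a
    rw [inv_inv', inv_inv']

lemma bstar_mul (ω ω' : Bitrans S) : bstar (ω * ω') = bstar ω' * bstar ω := by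
  refine Bitrans.ext ?_ ?_ <;> funext a
  · show (ω'.r (ω.r a⁻¹))⁻¹ = (ω'.r (((ω.r a⁻¹)⁻¹)⁻¹))⁻¹
    rw [inv_inv']
  · show (ω.l (ω'.l a⁻¹))⁻¹ = (ω.l (((ω'.l a⁻¹)⁻¹)⁻¹))⁻¹
    rw [inv_inv']

lemma mul_bstar_mul (ω : Bitrans S) : ω * bstar ω * ω = ω := by
  refine Bitrans.ext ?_ ?_ <;> funext a
  · show ω.l ((ω.r (ω.l a)⁻¹)⁻¹) = ω.l a
    set c := ω.l a with hc
    set b := ω.r c⁻¹ with hb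
    have h1 : c⁻¹ * c = b * a := by
      have h0 := ω.linked c⁻¹ a
      rw [← hc] at h0
      exact h0
    have h2 : b = c⁻¹ * c * b := by
      have h := ω.r_mul (c⁻¹ * c) c⁻¹
      rw [inv_mul_inv] at h
      rw [hb]; exact h
    have hbinv : a * (c⁻¹ * c) = b⁻¹ := by
      apply inv_unique (a := b)
      · calc b * (a * (c⁻¹ * c)) * b
            = (b * a) * ((c⁻¹ * c) * b) := by simp only [mul_assoc]
          _ = (c⁻¹ * c) * ((c⁻¹ * c) * b) := by rw [← h1]
          _ = ((c⁻¹ * c) * (c⁻¹ * c)) * b := by simp only [mul_assoc]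
          _ = (c⁻¹ * c) * b := by rw [dom_idem]
          _ = b := h2.symm
      · calc (a * (c⁻¹ * c)) * b * (a * (c⁻¹ * c))
            = a * ((c⁻¹ * c) * ((b * a) * (c⁻¹ * c))) := by simp only [mul_assoc]
          _ = a * ((c⁻¹ * c) * ((c⁻¹ * c) * (c⁻¹ * c))) := by rw [← h1]
          _ = a * (c⁻¹ * c) := by rw [dom_idem, dom_idem]
    rw [← hbinv, ω.l_mul, ← hc, ← mul_assoc, mul_inv_mul]
  · show ω.r ((ω.l (ω.r a)⁻¹)⁻¹) = ω.r a
    set c := ω.r a with hc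
    set b := ω.l c⁻¹ with hb
    have h1 : c * c⁻¹ = a * b := by
      have h0 := ω.linked a c⁻¹
      rw [← hc] at h0
      exact h0.symm
    have h2 : b = b * (c * c⁻¹) := by
      have h := ω.l_mul c⁻¹ (c * c⁻¹)
      rw [← mul_assoc, inv_mul_inv] at h
      rw [hb]; exact h
    have hbinv : (c * c⁻¹) * a = b⁻¹ := by
      apply inv_unique (a := b)
      · calc b * ((c * c⁻¹) * a) * b
            = b * ((c * c⁻¹) * (a * b)) := by simp only [mul_assoc]
          _ = b * ((c * c⁻¹) * (c * c⁻¹)) := by rw [← h1]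
          _ = b * (c * c⁻¹) := by rw [ran_idem]
          _ = b := h2.symm
      · calc ((c * c⁻¹) * a) * b * ((c * c⁻¹) * a)
            = (c * c⁻¹) * ((a * b) * ((c * c⁻¹) * a)) := by simp only [mul_assoc]
          _ = (c * c⁻¹) * ((c * c⁻¹) * ((c * c⁻¹) * a)) := by rw [← h1]
          _ = ((c * c⁻¹) * (c * c⁻¹)) * ((c * c⁻¹) * a) := by
              simp only [mul_assoc]
          _ = (c * c⁻¹) * ((c * c⁻¹) * a) := by rw [ran_idem]
          _ = ((c * c⁻¹) * (c * c⁻¹)) * a := by simp only [mul_assoc]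
          _ = (c * c⁻¹) * a := by rw [ran_idem]
    rw [← hbinv, ω.r_mul, ← hc, mul_inv_mul]

lemma bstar_mul_bstar (ω : Bitrans S) : bstar ω * ω * bstar ω = bstar ω := by
  have h := mul_bstar_mul (bstar ω)
  rwa [bstar_bstar] at h

lemma inner_mul' (a b : S) :
    innerBitrans a * innerBitrans b = innerBitrans (a * b) := by
  refine Bitrans.ext ?_ ?_ <;> funext x
  · show a * (b * x) = a * b * x
    rw [mul_assoc]
  · show (x * a) * b = x * (a * b)
    rw [mul_assoc]

lemma inner_mul_bitrans (c : S) (ω : Bitrans S) :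
    innerBitrans c * ω = innerBitrans (ω.r c) := by
  refine Bitrans.ext ?_ ?_ <;> funext x
  · show c * ω.l x = ω.r c * x
    exact ω.linked c x
  · show ω.r (x * c) = x * ω.r c
    exact ω.r_mul x c

lemma bitrans_mul_inner (c : S) (ω : Bitrans S) :
    ω * innerBitrans c = innerBitrans (ω.l c) := by
  refine Bitrans.ext ?_ ?_ <;> funext x
  · show ω.l (c * x) = ω.l c * x
    exact ω.l_mul c x
  · show ω.r x * c = x * ω.l c
    exact (ω.linked x c).symm

lemma inner_injective : Function.Injective (innerBitrans (S := S)) := by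
  intro a b h
  refine my_right_mul_cancel (fun x => ?_)
  exact congrFun (congrArg Bitrans.r h) x

end Bitrans

section MyConstruction

open InverseSemigroup

lemma PElem_ext' {K T : Type*} [Mul T] :
    ∀ {α β : PElem K T}, α.gen = β.gen →
      (∀ (x : T) (hx : x * α.gen = x) (hx' : x * β.gen = x),
        α.val ⟨x, hx⟩ = β.val ⟨x, hx'⟩) → α = β := by
  rintro ⟨g, hi, v⟩ ⟨g', hi', v'⟩ hg hv
  dsimp only at hg hv
  subst hg
  have hvv : v = v' := by
    funext x
    obtain ⟨x1, hx1⟩ := x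
    exact hv x1 hx1 hx1
  subst hvv
  rfl

variable {S : Type*} [InverseSemigroup S] (θ : Con S)
  (ξ : θ.Quotient → Bitrans S)

/-- The value `α_s(x)` of the function component of the embedding. -/
def AElt (s : S) (x : θ.Quotient) : S :=
  ((ξ (x * (s : θ.Quotient))).l (((ξ x).l s)⁻¹))⁻¹

/-- The embedding itself (given the kernel-membership proofs). -/
def psiFun (hk : ∀ (s : S) (x : θ.Quotient),
      ∃ e : S, e * e = e ∧ θ (AElt θ ξ s x) e) :
    S → PElem (KerSub θ) θ.Quotient × θ.Quotient :=
  fun s =>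
    (⟨iran ((s : S) : θ.Quotient), ran_idem _,
      fun x => ⟨AElt θ ξ s x.1, hk s x.1⟩⟩, ((s : S) : θ.Quotient))

end MyConstruction
/-- Let `θ` be an almost Billhardt congruence on an inverse
semigroup `S`, and let `η : Ker θ → E(S/θ)` be the restriction of `θ^♮`.
Then the normal extension `(S, θ)` is embeddable, as a normal extension, in
Houghton's wreath product of `Ker θ` by `S/θ` along `η`, i.e. in the full
restricted semidirect product `P^η_{Ker θ, S/θ} ⋊ (S/θ)`, equipped with the
congruence induced by its second projection. -/
theorem almost_billhardt_embeds_in_houghton {S : Type*} [InverseSemigroup S]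
    (θ : Con S)
    (hAB : ∃ ξ : θ.Quotient → Bitrans S, IsAlmostBillhardt θ ξ) :
    ∃ ψ : S → PElem (KerSub θ) θ.Quotient × θ.Quotient,
      Function.Injective ψ ∧
      (∀ s : S, ψ s ∈ hwrEtaSet (etaMap θ)) ∧
      (∀ s s' : S, ψ (s * s') = hwrMul (ψ s) (ψ s')) ∧
      (∀ s ∈ KerCon θ, ψ s ∈ pi2Kernel hwrMul (hwrEtaSet (etaMap θ))) ∧
      (∀ s s' : S, θ s s' ↔ (ψ s).2 = (ψ s').2) := by
  classical
  obtain ⟨ξ, hResp, hB1, hB2⟩ := hAB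
  clear hResp
  have hB1l : ∀ (t : θ.Quotient) (s : S),
      (((ξ t).l s : S) : θ.Quotient) = t * (s : θ.Quotient) :=
    fun t s => (hB1 t s).1
  -- the θ-class of the values `α_s(x)`
  have hAcl : ∀ (s : S) (x : θ.Quotient),
      ((AElt θ ξ s x : S) : θ.Quotient) = iran (x * (s : θ.Quotient)) := by
    intro s x
    simp only [AElt]
    rw [← quot_inv_coe θ, hB1l, ← quot_inv_coe θ, hB1l]
    simp only [iran]
    exact InverseSemigroup.idem_inv (InverseSemigroup.ran_idem _)
  have hAker : ∀ (s : S) (x : θ.Quotient),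
      ∃ e : S, e * e = e ∧ θ (AElt θ ξ s x) e := by
    intro s x
    apply lallement θ
    apply (θ.eq).1
    rw [Con.coe_mul, hAcl s x]
    simp only [iran]
    exact InverseSemigroup.ran_idem _
  -- the key absorption property, via (B2)
  have key : ∀ (w : S) (t : θ.Quotient), ((w : S) : θ.Quotient) = t →
      innerBitrans w * Bitrans.bstar (ξ t) * ξ t = innerBitrans w := by
    intro w t hw
    by_cases hmem : innerBitrans w ∈ Set.range ξ
    · obtain ⟨t', ht'⟩ := hmem
      have htt : t' = t := by
        apply my_left_mul_cancel
        intro z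
        induction z using Con.induction_on with
        | H y =>
          have h1 := hB1l t' y
          have h2 : (ξ t').l y = w * y := by rw [ht']; rfl
          rw [h2, Con.coe_mul, hw] at h1
          exact h1.symm
      rw [← ht', htt]
      exact Bitrans.mul_bstar_mul _
    · have hcl : ∀ y : S,
          (((innerBitrans w).l y : S) : θ.Quotient) = t * (y : θ.Quotient) ∧
          (((innerBitrans w).r y : S) : θ.Quotient) = (y : θ.Quotient) * t := by
        intro y
        constructor
        · show ((w * y : S) : θ.Quotient) = t * (y : θ.Quotient)
          rw [Con.coe_mul, hw]
        · show ((y * w : S) : θ.Quotient) = (y : θ.Quotient) * t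
          rw [Con.coe_mul, hw]
      have hinv1 : IsInvPair (ξ t) (Bitrans.bstar (ξ t)) :=
        ⟨Bitrans.mul_bstar_mul _, Bitrans.bstar_mul_bstar _⟩
      have hinv2 : IsInvPair (innerBitrans w) (innerBitrans w⁻¹) := by
        refine ⟨?_, ?_⟩
        · rw [Bitrans.inner_mul', Bitrans.inner_mul',
            InverseSemigroup.mul_inv_mul]
        · rw [Bitrans.inner_mul', Bitrans.inner_mul',
            InverseSemigroup.inv_mul_inv]
      have hSb : innerBitrans w ∈ Sbar θ ξ :=
        Subsemigroup.subset_closure (Or.inl (Or.inl ⟨w, rfl⟩))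
      obtain ⟨e, -, hee, heq⟩ :=
        hB2 (innerBitrans w) hSb hmem t hcl (Bitrans.bstar (ξ t))
          (innerBitrans w⁻¹) hinv1 hinv2
      have hεε : (Bitrans.bstar (ξ t) * ξ t) * (Bitrans.bstar (ξ t) * ξ t)
          = Bitrans.bstar (ξ t) * ξ t := by
        have h := Bitrans.mul_bstar_mul (ξ t)
        calc (Bitrans.bstar (ξ t) * ξ t) * (Bitrans.bstar (ξ t) * ξ t)
            = Bitrans.bstar (ξ t) * (ξ t * Bitrans.bstar (ξ t) * ξ t) := by
              simp only [mul_assoc]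
          _ = Bitrans.bstar (ξ t) * ξ t := by rw [h]
      have hww : innerBitrans w * (innerBitrans w⁻¹ * innerBitrans w)
          = innerBitrans w := by
        rw [Bitrans.inner_mul', Bitrans.inner_mul', ← mul_assoc,
          InverseSemigroup.mul_inv_mul]
      calc innerBitrans w * Bitrans.bstar (ξ t) * ξ t
          = innerBitrans w * (Bitrans.bstar (ξ t) * ξ t) := by rw [mul_assoc]
        _ = (innerBitrans w * (innerBitrans w⁻¹ * innerBitrans w)) *
              (Bitrans.bstar (ξ t) * ξ t) := by rw [hww]
        _ = innerBitrans w * ((innerBitrans w⁻¹ * innerBitrans w) *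
              (Bitrans.bstar (ξ t) * ξ t)) := by rw [mul_assoc]
        _ = innerBitrans w * ((e * (Bitrans.bstar (ξ t) * ξ t)) *
              (Bitrans.bstar (ξ t) * ξ t)) := by rw [heq]
        _ = innerBitrans w * (e * ((Bitrans.bstar (ξ t) * ξ t) *
              (Bitrans.bstar (ξ t) * ξ t))) := by rw [mul_assoc]
        _ = innerBitrans w * (e * (Bitrans.bstar (ξ t) * ξ t)) := by rw [hεε]
        _ = innerBitrans w * (innerBitrans w⁻¹ * innerBitrans w) := by
              rw [← heq]
        _ = innerBitrans w := hww
  have habsorb_r : ∀ (w : S) (t : θ.Quotient), ((w : S) : θ.Quotient) = t →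
      (Bitrans.bstar (ξ t) * ξ t).r w = w := by
    intro w t hw
    apply Bitrans.inner_injective
    rw [← Bitrans.inner_mul_bitrans, ← mul_assoc, key w t hw]
  have habsorb_l : ∀ (w : S) (t : θ.Quotient), ((w : S) : θ.Quotient) = t →
      (Bitrans.bstar (ξ t⁻¹) * ξ t⁻¹).l w = w := by
    intro w t hw
    have hwi : ((w⁻¹ : S) : θ.Quotient) = t⁻¹ := by
      rw [← quot_inv_coe θ, hw]
    have h1 : (Bitrans.bstar (ξ t⁻¹) * ξ t⁻¹).r w⁻¹ = w⁻¹ :=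
      habsorb_r w⁻¹ t⁻¹ hwi
    have hbs : Bitrans.bstar (Bitrans.bstar (ξ t⁻¹) * ξ t⁻¹)
        = Bitrans.bstar (ξ t⁻¹) * ξ t⁻¹ := by
      rw [Bitrans.bstar_mul, Bitrans.bstar_bstar]
    calc (Bitrans.bstar (ξ t⁻¹) * ξ t⁻¹).l w
        = (Bitrans.bstar (Bitrans.bstar (ξ t⁻¹) * ξ t⁻¹)).l w := by rw [hbs]
      _ = ((Bitrans.bstar (ξ t⁻¹) * ξ t⁻¹).r w⁻¹)⁻¹ := rfl
      _ = (w⁻¹)⁻¹ := by rw [h1]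
      _ = w := InverseSemigroup.inv_inv' w
  -- the inner bitranslation induced by a value of `α`
  have hA : ∀ (r : S) (x : θ.Quotient),
      innerBitrans (AElt θ ξ r x)
        = innerBitrans ((ξ x).l r)
          * Bitrans.bstar (ξ (x * (r : θ.Quotient))) := by
    intro r x
    rw [Bitrans.inner_mul_bitrans]
    rfl
  -- the crucial multiplicativity of the values
  have hMain : ∀ (s s' : S) (x : θ.Quotient),
      AElt θ ξ (s * s') x
        = AElt θ ξ s x * AElt θ ξ s' (x * (s : θ.Quotient)) := by
    intro s s' x
    apply Bitrans.inner_injective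
    rw [← Bitrans.inner_mul', hA (s * s') x, hA s x,
      hA s' (x * (s : θ.Quotient))]
    have hidx : x * ((s * s' : S) : θ.Quotient)
        = x * (s : θ.Quotient) * (s' : θ.Quotient) := by
      rw [Con.coe_mul, mul_assoc]
    rw [hidx, (ξ x).l_mul s s']
    have hkey2 : (ξ x).l s * (Bitrans.bstar (ξ (x * (s : θ.Quotient)))).l
        ((ξ (x * (s : θ.Quotient))).l s') = (ξ x).l s * s' := by
      have hlink := (Bitrans.bstar (ξ (x * (s : θ.Quotient)))
        * ξ (x * (s : θ.Quotient))).linked ((ξ x).l s) s'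
      rw [Bitrans.mul_l'] at hlink
      rw [hlink, habsorb_r ((ξ x).l s) (x * (s : θ.Quotient)) (hB1l x s)]
    calc innerBitrans ((ξ x).l s * s')
          * Bitrans.bstar (ξ (x * (s : θ.Quotient) * (s' : θ.Quotient)))
        = innerBitrans ((ξ x).l s * (Bitrans.bstar (ξ (x * (s : θ.Quotient)))).l
            ((ξ (x * (s : θ.Quotient))).l s'))
          * Bitrans.bstar (ξ (x * (s : θ.Quotient) * (s' : θ.Quotient))) := by
          rw [hkey2]
      _ = (innerBitrans ((ξ x).l s)
            * innerBitrans ((Bitrans.bstar (ξ (x * (s : θ.Quotient)))).l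
              ((ξ (x * (s : θ.Quotient))).l s')))
          * Bitrans.bstar (ξ (x * (s : θ.Quotient) * (s' : θ.Quotient))) := by
          rw [Bitrans.inner_mul']
      _ = (innerBitrans ((ξ x).l s)
            * (Bitrans.bstar (ξ (x * (s : θ.Quotient)))
              * innerBitrans ((ξ (x * (s : θ.Quotient))).l s')))
          * Bitrans.bstar (ξ (x * (s : θ.Quotient) * (s' : θ.Quotient))) := by
          rw [Bitrans.bitrans_mul_inner ((ξ (x * (s : θ.Quotient))).l s')
            (Bitrans.bstar (ξ (x * (s : θ.Quotient))))]
      _ = innerBitrans ((ξ x).l s) * Bitrans.bstar (ξ (x * (s : θ.Quotient)))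
          * (innerBitrans ((ξ (x * (s : θ.Quotient))).l s')
            * Bitrans.bstar (ξ (x * (s : θ.Quotient) * (s' : θ.Quotient)))) := by
          simp only [mul_assoc]
  -- the embedding and its properties
  have hhom : ∀ s s' : S,
      psiFun θ ξ hAker (s * s')
        = hwrMul (psiFun θ ξ hAker s) (psiFun θ ξ hAker s') := by
    intro s s'
    refine Prod.ext ?_ ?_
    · refine PElem_ext' ?_ ?_
      · show iran ((s * s' : S) : θ.Quotient)
          = iran ((s : S) : θ.Quotient)
            * (((s : S) : θ.Quotient) * iran ((s' : S) : θ.Quotient)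
              * (((s : S) : θ.Quotient))⁻¹)
        simp only [iran, Con.coe_mul]
        exact iran_mul_split _ _
      · intro x hx hx'
        exact Subtype.ext (hMain s s' x)
    · exact Con.coe_mul s s'
  have hmem : ∀ s : S, psiFun θ ξ hAker s ∈ hwrEtaSet (etaMap θ) := by
    intro s
    simp only [hwrEtaSet, Peta, Set.mem_setOf_eq]
    refine ⟨?_, rfl⟩
    intro x
    show ((AElt θ ξ s x.1 : S) : θ.Quotient) = iran x.1
    rw [hAcl s x.1]
    have hx2 : x.1 * (((s : S) : θ.Quotient) * (((s : S) : θ.Quotient))⁻¹)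
        = x.1 := x.2
    simp only [iran]
    exact iran_mul_absorb hx2
  have hval : ∀ {α β : PElem (KerSub θ) θ.Quotient}, α = β →
      ∀ (x : θ.Quotient) (hxa : x * α.gen = x) (hxb : x * β.gen = x),
        (α.val ⟨x, hxa⟩).1 = (β.val ⟨x, hxb⟩).1 := by
    rintro α β rfl x hxa hxb
    rfl
  have hinj : Function.Injective (psiFun θ ξ hAker) := by
    intro s s' h
    have h2 : ((s : S) : θ.Quotient) = ((s' : S) : θ.Quotient) :=
      congrArg Prod.snd h
    have h1 : (psiFun θ ξ hAker s).1 = (psiFun θ ξ hAker s').1 :=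
      congrArg Prod.fst h
    have hxa : (((s : S) : θ.Quotient))⁻¹ * iran ((s : S) : θ.Quotient)
        = (((s : S) : θ.Quotient))⁻¹ := by
      simp only [iran]
      rw [← mul_assoc, InverseSemigroup.inv_mul_inv]
    have hxb : (((s : S) : θ.Quotient))⁻¹ * iran ((s' : S) : θ.Quotient)
        = (((s : S) : θ.Quotient))⁻¹ := by
      rw [← h2]; exact hxa
    have hv : AElt θ ξ s ((((s : S) : θ.Quotient))⁻¹)
        = AElt θ ξ s' ((((s : S) : θ.Quotient))⁻¹) :=
      hval h1 ((((s : S) : θ.Quotient))⁻¹) hxa hxb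
    have estep : ∀ r : S,
        innerBitrans ((ξ ((((s : S) : θ.Quotient))⁻¹)).l r)
          = innerBitrans (AElt θ ξ r ((((s : S) : θ.Quotient))⁻¹))
            * ξ ((((s : S) : θ.Quotient))⁻¹ * ((r : S) : θ.Quotient)) := by
      intro r
      rw [hA r ((((s : S) : θ.Quotient))⁻¹),
        key ((ξ ((((s : S) : θ.Quotient))⁻¹)).l r)
          ((((s : S) : θ.Quotient))⁻¹ * ((r : S) : θ.Quotient))
          (hB1l ((((s : S) : θ.Quotient))⁻¹) r)]
    have hw : (ξ ((((s : S) : θ.Quotient))⁻¹)).l s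
        = (ξ ((((s : S) : θ.Quotient))⁻¹)).l s' := by
      apply Bitrans.inner_injective
      calc innerBitrans ((ξ ((((s : S) : θ.Quotient))⁻¹)).l s)
          = innerBitrans (AElt θ ξ s ((((s : S) : θ.Quotient))⁻¹))
            * ξ ((((s : S) : θ.Quotient))⁻¹ * ((s : S) : θ.Quotient)) := estep s
        _ = innerBitrans (AElt θ ξ s' ((((s : S) : θ.Quotient))⁻¹))
            * ξ ((((s : S) : θ.Quotient))⁻¹ * ((s' : S) : θ.Quotient)) := by
            rw [hv, h2]
        _ = innerBitrans ((ξ ((((s : S) : θ.Quotient))⁻¹)).l s') :=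
            (estep s').symm
    have habs_s : (Bitrans.bstar (ξ ((((s : S) : θ.Quotient))⁻¹))
        * ξ ((((s : S) : θ.Quotient))⁻¹)).l s = s :=
      habsorb_l s ((s : S) : θ.Quotient) rfl
    have habs_s' : (Bitrans.bstar (ξ ((((s : S) : θ.Quotient))⁻¹))
        * ξ ((((s : S) : θ.Quotient))⁻¹)).l s' = s' := by
      have h3 := habsorb_l s' ((s' : S) : θ.Quotient) rfl
      rw [← h2] at h3
      exact h3
    calc s = (Bitrans.bstar (ξ ((((s : S) : θ.Quotient))⁻¹))
          * ξ ((((s : S) : θ.Quotient))⁻¹)).l s := habs_s.symm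
      _ = (Bitrans.bstar (ξ ((((s : S) : θ.Quotient))⁻¹))).l
            ((ξ ((((s : S) : θ.Quotient))⁻¹)).l s) := by rw [Bitrans.mul_l']
      _ = (Bitrans.bstar (ξ ((((s : S) : θ.Quotient))⁻¹))).l
            ((ξ ((((s : S) : θ.Quotient))⁻¹)).l s') := by rw [hw]
      _ = (Bitrans.bstar (ξ ((((s : S) : θ.Quotient))⁻¹))
          * ξ ((((s : S) : θ.Quotient))⁻¹)).l s' := by rw [Bitrans.mul_l']
      _ = s' := habs_s'
  refine ⟨psiFun θ ξ hAker, hinj, hmem, hhom, ?_, ?_⟩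
  · intro s hs
    obtain ⟨e, hee, hθ⟩ := hs
    exact ⟨hmem s, psiFun θ ξ hAker e, hmem e,
      (hhom e e).symm.trans (congrArg (psiFun θ ξ hAker) hee),
      (θ.eq.2 hθ).symm⟩
  · intro s s'
    exact ⟨fun hss => θ.eq.2 hss, fun hq => θ.eq.1 hq⟩
end

section
/- For any inverse semigroups K and T, the map Ψ: K Wr^λ T → K Wr^H T, Ψ(f,t) = (f|_{Tt⁻¹}, t), where f|_{Tt⁻¹} denotes the restriction of f to the principal left ideal Tt⁻¹, is an isomorphism of inverse semigroups between the λ-wreath product and Houghton's wreath product of K by T. -/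
/-- The action of `T` on the direct power `K^T`: `(t·f)(x) = f(xt)`. -/
def lwrAct {K T : Type*} [Mul T] (t : T) (f : T → K) : T → K :=
  fun x => f (x * t)

/-- The carrier of the λ-wreath product `K Wr^λ T`:
`{(f,t) ∈ K^T × T : f = ran(t) · f}`. -/
def lwrSet (K T : Type*) [Mul K] [InverseSemigroup T] : Set ((T → K) × T) :=
  {p | lwrAct (iran p.2) p.1 = p.1}

/-- The multiplication of the λ-wreath product:
`(f,t)(g,u) = ((ran(tu)·f)(t·g), tu)` (pointwise product in `K^T`). -/
def lwrMul {K T : Type*} [Mul K] [InverseSemigroup T]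
    (p q : (T → K) × T) : (T → K) × T :=
  (lwrAct (iran (p.2 * q.2)) p.1 * lwrAct p.2 q.1, p.2 * q.2)

/-- The map `Ψ : K Wr^λ T → K Wr^H T`, `Ψ(f,t) = (f|_{Tt⁻¹}, t)`, restricting
`f` to the principal left ideal `Tt⁻¹ = T·ran(t)`. -/
def PsiWr {K T : Type*} [InverseSemigroup T] (p : (T → K) × T) :
    PElem K T × T :=
  (⟨p.2 * p.2⁻¹, InverseSemigroup.ran_idem p.2, fun x => p.1 x.1⟩, p.2)


open InverseSemigroup in
lemma PElem.ext' {K T : Type*} [InverseSemigroup T] {a b : PElem K T}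
    (hg : a.gen = b.gen)
    (hv : ∀ x (hx : x * a.gen = x) (hx' : x * b.gen = x),
      a.val ⟨x, hx⟩ = b.val ⟨x, hx'⟩) : a = b := by
  obtain ⟨g, hgi, v⟩ := a
  obtain ⟨g', hgi', v'⟩ := b
  simp only at hg
  subst hg
  simp only [PElem.mk.injEq, heq_eq_eq, true_and]
  funext x
  exact hv x.1 x.2 x.2

/-- For any inverse semigroups `K` and `T`, the map
`Ψ : K Wr^λ T → K Wr^H T`, `Ψ(f,t) = (f|_{Tt⁻¹}, t)`, is an isomorphism of
inverse semigroups between the λ-wreath product and Houghton's wreath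
product of `K` by `T`. -/
theorem lambda_wreath_iso_houghton_wreath {K T : Type*} [InverseSemigroup K]
    [InverseSemigroup T] :
    Set.BijOn PsiWr (lwrSet K T) (hwrSet K T) ∧
    (∀ p ∈ lwrSet K T, ∀ q ∈ lwrSet K T,
        PsiWr (lwrMul p q) = hwrMul (PsiWr p) (PsiWr q)) := by
  have ideal_eq : ∀ t : T, {x : T | x * (t * t⁻¹) = x} = lIdeal T t⁻¹ := by
    intro t
    ext x
    constructor
    · intro hx
      exact ⟨x * t, by rw [mul_assoc, hx]⟩
    · rintro ⟨y, rfl⟩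
      show y * t⁻¹ * (t * t⁻¹) = y * t⁻¹
      rw [mul_assoc, ← mul_assoc t⁻¹, InverseSemigroup.inv_mul_inv]
  constructor
  · refine ⟨?_, ?_, ?_⟩
    · -- MapsTo
      intro p _
      show {x : T | x * (p.2 * p.2⁻¹) = x} = lIdeal T p.2⁻¹
      exact ideal_eq p.2
    · -- InjOn
      rintro ⟨f, t⟩ hp ⟨g, u⟩ hq h
      have h2 : t = u := congrArg Prod.snd h
      subst h2
      have h1 := congrArg Prod.fst h
      simp only [PsiWr, PElem.mk.injEq, heq_eq_eq, true_and] at h1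
      have hval : ∀ x (hx : x * (t * t⁻¹) = x), f x = g x := by
        intro x hx
        exact congrFun h1 (⟨x, hx⟩ : {x : T // x * (t * t⁻¹) = x})
      have hf : ∀ x, f (x * (t * t⁻¹)) = f x := fun x => congrFun hp x
      have hg : ∀ x, g (x * (t * t⁻¹)) = g x := fun x => congrFun hq x
      have hmem : ∀ x : T, (x * (t * t⁻¹)) * (t * t⁻¹) = x * (t * t⁻¹) := by
        intro x; rw [mul_assoc, InverseSemigroup.ran_idem]
      refine Prod.ext ?_ rfl
      funext x
      show f x = g x
      rw [← hf x, ← hg x]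
      exact hval _ (hmem x)
    · -- SurjOn
      rintro ⟨a, u⟩ hr
      have hr' : {x : T | x * a.gen = x} = lIdeal T u⁻¹ := hr
      have hgu1 : a.gen * (u * u⁻¹) = a.gen := by
        have hmem : a.gen ∈ lIdeal T u⁻¹ := hr' ▸ (a.idem : a.gen ∈ {x | x * a.gen = x})
        obtain ⟨y, hy⟩ := hmem
        rw [hy, mul_assoc, ← mul_assoc u⁻¹, InverseSemigroup.inv_mul_inv]
      have hgu2 : (u * u⁻¹) * a.gen = u * u⁻¹ := by
        have hmem : u * u⁻¹ ∈ lIdeal T u⁻¹ := ⟨u, rfl⟩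
        show u * u⁻¹ ∈ {x : T | x * a.gen = x}
        rw [hr']
        exact hmem
      have hge : a.gen = u * u⁻¹ := by
        rw [← hgu1, InverseSemigroup.idem_comm a.idem (InverseSemigroup.ran_idem u), hgu2]
      refine ⟨(fun x => a.val ⟨x * a.gen, by rw [mul_assoc, a.idem]⟩, u), ?_, ?_⟩
      · show lwrAct (iran u) _ = _
        funext x
        show a.val ⟨x * (u * u⁻¹) * a.gen, _⟩ = a.val ⟨x * a.gen, _⟩
        congr 1
        apply Subtype.ext
        show x * (u * u⁻¹) * a.gen = x * a.gen
        rw [← hge, mul_assoc, a.idem]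
      · refine Prod.ext ?_ rfl
        refine PElem.ext' hge.symm ?_
        intro x hx hx'
        show a.val ⟨x * a.gen, _⟩ = a.val ⟨x, hx'⟩
        congr 1
        exact Subtype.ext hx'
  · -- Homomorphism
    rintro ⟨f, t⟩ _ ⟨g, u⟩ _
    refine Prod.ext ?_ rfl
    refine PElem.ext' ?_ ?_
    · show (t * u) * (t * u)⁻¹ = (t * t⁻¹) * (t * (u * u⁻¹) * t⁻¹)
      rw [InverseSemigroup.mul_inv_rev']
      simp only [← mul_assoc]
      rw [InverseSemigroup.mul_inv_mul]
    · intro x hx hx'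
      show f (x * ((t * u) * (t * u)⁻¹)) * g (x * t) = f x * g (x * t)
      rw [show x * ((t * u) * (t * u)⁻¹) = x from hx]
end

section
/- Let K and T be inverse semigroups and let T act on K by endomorphisms. The Kernel of the congruence induced by the second projection π₂ of the λ-semidirect product K⋊^λT equals 𝕂 = ⋃_{e∈E(T)} 𝕂_e, where 𝕂_e = {(a,e) ∈ K×E(T) : e·a = a} = (e·K)×{e}; consequently K⋊^λT is a normal extension of 𝕂 by T along the homomorphism η: 𝕂 → E(T), (a,e) ↦ e. -/
/-- The set `𝕂 = ⋃_{e ∈ E(T)} 𝕂_e`, where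
`𝕂_e = {(a,e) ∈ K × E(T) : e · a = a}`. -/
def KK {K T : Type*} [Mul K] [Mul T] (act : T → K → K) : Set (K × T) :=
  {p | p.2 ∈ idemSet T ∧ act p.2 p.1 = p.1}


section ISGLemmas
variable {T : Type*} [InverseSemigroup T]

lemma isg_inv_inv (a : T) : a⁻¹⁻¹ = a :=
  (InverseSemigroup.inv_unique (InverseSemigroup.inv_mul_inv a)
    (InverseSemigroup.mul_inv_mul a)).symm

lemma isg_idem_inv {e : T} (he : e * e = e) : e⁻¹ = e := by
  have h : e * e * e = e := by rw [he, he]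
  exact (InverseSemigroup.inv_unique h h).symm

lemma isg_idem_mul {e f : T} (he : e * e = e) (hf : f * f = f) :
    (e * f) * (e * f) = e * f := by
  have he' : ∀ x : T, e * (e * x) = e * x := fun x => by rw [← mul_assoc, he]
  have hf' : ∀ x : T, f * (f * x) = f * x := fun x => by rw [← mul_assoc, hf]
  set b := (e * f)⁻¹ with hbdef
  have hb1 : e * (f * (b * (e * f))) = e * f := by
    have := InverseSemigroup.mul_inv_mul (e * f); simpa [mul_assoc] using this
  have hb2 : b * (e * (f * b)) = b := by
    have := InverseSemigroup.inv_mul_inv (e * f); simpa [mul_assoc] using this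
  have hg_idem : (f * (b * e)) * (f * (b * e)) = f * (b * e) := by
    calc f * (b * e) * (f * (b * e)) = f * ((b * (e * (f * b))) * e) := by
          simp [mul_assoc]
      _ = f * (b * e) := by rw [hb2]
  have hinv1 : (e * f) * (f * (b * e)) * (e * f) = e * f := by
    calc (e * f) * (f * (b * e)) * (e * f)
        = e * (f * (f * (b * (e * (e * f))))) := by simp [mul_assoc]
      _ = e * (f * (b * (e * f))) := by rw [hf', he']
      _ = e * f := hb1
  have hinv2 : (f * (b * e)) * (e * f) * (f * (b * e)) = f * (b * e) := by
    calc (f * (b * e)) * (e * f) * (f * (b * e))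
        = f * (b * (e * (e * (f * (f * (b * e)))))) := by simp [mul_assoc]
      _ = f * (b * (e * (f * (b * e)))) := by rw [he', hf']
      _ = f * ((b * (e * (f * b))) * e) := by simp [mul_assoc]
      _ = f * (b * e) := by rw [hb2]
  have hgb : f * (b * e) = b := InverseSemigroup.inv_unique hinv1 hinv2
  have hb_idem : b * b = b := by rw [← hgb]; exact hg_idem
  have hef : e * f = b := by
    rw [← isg_idem_inv hb_idem, hbdef, isg_inv_inv]
  rw [hef]; exact hb_idem

lemma isg_idem_comm {e f : T} (he : e * e = e) (hf : f * f = f) :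
    e * f = f * e := by
  have he' : ∀ x : T, e * (e * x) = e * x := fun x => by rw [← mul_assoc, he]
  have hf' : ∀ x : T, f * (f * x) = f * x := fun x => by rw [← mul_assoc, hf]
  have hef : (e * f) * (e * f) = e * f := isg_idem_mul he hf
  have hinv1 : (e * f) * (f * e) * (e * f) = e * f := by
    calc (e * f) * (f * e) * (e * f) = e * (f * (f * (e * (e * f)))) := by
          simp [mul_assoc]
      _ = e * (f * (e * f)) := by rw [hf', he']
      _ = (e * f) * (e * f) := by simp [mul_assoc]
      _ = e * f := hef
  have hinv2 : (f * e) * (e * f) * (f * e) = f * e := by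
    have hfe : (f * e) * (f * e) = f * e := isg_idem_mul hf he
    calc (f * e) * (e * f) * (f * e) = f * (e * (e * (f * (f * e)))) := by
          simp [mul_assoc]
      _ = f * (e * (f * e)) := by rw [he', hf']
      _ = (f * e) * (f * e) := by simp [mul_assoc]
      _ = f * e := hfe
  have := InverseSemigroup.inv_unique hinv1 hinv2
  rw [this]; exact (isg_idem_inv hef).symm

lemma isg_dom_idem (a : T) : (a⁻¹ * a) * (a⁻¹ * a) = a⁻¹ * a := by
  have := InverseSemigroup.inv_mul_inv a
  calc (a⁻¹ * a) * (a⁻¹ * a) = (a⁻¹ * a * a⁻¹) * a := by simp [mul_assoc]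
    _ = a⁻¹ * a := by rw [this]

lemma isg_ran_idem (a : T) : (a * a⁻¹) * (a * a⁻¹) = a * a⁻¹ := by
  have := InverseSemigroup.mul_inv_mul a
  calc (a * a⁻¹) * (a * a⁻¹) = (a * a⁻¹ * a) * a⁻¹ := by simp [mul_assoc]
    _ = a * a⁻¹ := by rw [this]

lemma isg_mul_inv_rev (a b : T) : (a * b)⁻¹ = b⁻¹ * a⁻¹ := by
  have h1 : (a * b) * (b⁻¹ * a⁻¹) * (a * b) = a * b := by
    calc (a * b) * (b⁻¹ * a⁻¹) * (a * b)
        = a * ((b * b⁻¹) * (a⁻¹ * a)) * b := by simp [mul_assoc]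
      _ = a * ((a⁻¹ * a) * (b * b⁻¹)) * b := by
          rw [isg_idem_comm (isg_ran_idem b) (isg_dom_idem a)]
      _ = (a * a⁻¹ * a) * (b * b⁻¹ * b) := by simp [mul_assoc]
      _ = a * b := by rw [InverseSemigroup.mul_inv_mul, InverseSemigroup.mul_inv_mul]
  have h2 : (b⁻¹ * a⁻¹) * (a * b) * (b⁻¹ * a⁻¹) = b⁻¹ * a⁻¹ := by
    calc (b⁻¹ * a⁻¹) * (a * b) * (b⁻¹ * a⁻¹)
        = b⁻¹ * ((a⁻¹ * a) * (b * b⁻¹)) * a⁻¹ := by simp [mul_assoc]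
      _ = b⁻¹ * ((b * b⁻¹) * (a⁻¹ * a)) * a⁻¹ := by
          rw [isg_idem_comm (isg_dom_idem a) (isg_ran_idem b)]
      _ = (b⁻¹ * b * b⁻¹) * (a⁻¹ * a * a⁻¹) := by simp [mul_assoc]
      _ = b⁻¹ * a⁻¹ := by rw [InverseSemigroup.inv_mul_inv, InverseSemigroup.inv_mul_inv]
  exact (InverseSemigroup.inv_unique h1 h2).symm

lemma iran_idem (t : T) : iran t ∈ idemSet T := isg_ran_idem t

lemma iran_of_idem {e : T} (he : e ∈ idemSet T) : iran e = e := by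
  unfold iran; rw [isg_idem_inv he, he]

lemma iran_mul_left (t u : T) : iran (t * u) * t = t * iran u := by
  unfold iran
  rw [isg_mul_inv_rev]
  calc t * u * (u⁻¹ * t⁻¹) * t = t * ((u * u⁻¹) * (t⁻¹ * t)) := by simp [mul_assoc]
    _ = t * ((t⁻¹ * t) * (u * u⁻¹)) := by
        rw [isg_idem_comm (isg_ran_idem u) (isg_dom_idem t)]
    _ = (t * t⁻¹ * t) * (u * u⁻¹) := by simp [mul_assoc]
    _ = t * (u * u⁻¹) := by rw [InverseSemigroup.mul_inv_mul]

end ISGLemmas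

/-- For inverse semigroups `K`, `T` and an action of `T` on `K`
by endomorphisms, the Kernel of the congruence induced by the second
projection `π₂` of `K ⋊^λ T` equals `𝕂 = ⋃_{e ∈ E(T)} 𝕂_e`, where
`𝕂_e = {(a,e) ∈ K × E(T) : e·a = a} = (e·K) × {e}`; consequently `K ⋊^λ T` is
a normal extension of `𝕂` by `T` along `η : 𝕂 → E(T), (a,e) ↦ e` (with the
embedding `ι : 𝕂 → K ⋊^λ T` being the inclusion, and the surjective
homomorphism `τ` being `π₂`). -/
theorem kernel_of_lsd {K T : Type*} [InverseSemigroup K] [InverseSemigroup T]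
    [Nonempty K] (act : T → K → K) (hact : IsAction act) :
    -- the Kernel of `ker π₂` on `K ⋊^λ T` is `𝕂`
    pi2Kernel (lsdMul act) (lsdSet act) = KK act ∧
    -- `𝕂_e = (e·K) × {e}` for every `e ∈ E(T)`
    KK act = {p : K × T | p.2 ∈ idemSet T ∧ ∃ b : K, p.1 = act p.2 b} ∧
    -- `K ⋊^λ T` is closed under `lsdMul`, `π₂` is a surjective homomorphism
    -- of `K ⋊^λ T` onto `T`, and its restriction to `𝕂` is
    -- `η : (a,e) ↦ e`, whence `K ⋊^λ T` is a normal extension of `𝕂` by `T`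
    -- along `η`
    (∀ p ∈ lsdSet act, ∀ q ∈ lsdSet act, lsdMul act p q ∈ lsdSet act ∧
        (lsdMul act p q).2 = p.2 * q.2) ∧
    (∀ t : T, ∃ p ∈ lsdSet act, p.2 = t) ∧
    (KK act ⊆ lsdSet act) := by
  obtain ⟨hmul, hcomp⟩ := hact
  -- 𝕂 ⊆ K ⋊^λ T
  have hsub : KK act ⊆ lsdSet act := by
    rintro ⟨a, e⟩ ⟨he, ha⟩
    show act (iran e) a = a
    rw [iran_of_idem he]; exact ha
  -- closure under multiplication
  have hclosed : ∀ p ∈ lsdSet act, ∀ q ∈ lsdSet act, lsdMul act p q ∈ lsdSet act ∧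
      (lsdMul act p q).2 = p.2 * q.2 := by
    rintro ⟨a, t⟩ hp ⟨b, u⟩ hq
    refine ⟨?_, rfl⟩
    have hp' : act (iran t) a = a := hp
    have hq' : act (iran u) b = b := hq
    show act (iran (t * u)) (act (iran (t * u)) a * act t b)
        = act (iran (t * u)) a * act t b
    rw [hmul, ← hcomp, ← hcomp]
    have h1 : iran (t * u) * iran (t * u) = iran (t * u) := iran_idem (t * u)
    have h2 : iran (t * u) * t = t * iran u := iran_mul_left t u
    rw [h1, h2, hcomp, hq']
  refine ⟨?_, ?_, hclosed, ?_, hsub⟩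
  · -- Kernel = 𝕂
    ext ⟨a, t⟩
    constructor
    · rintro ⟨hp, ⟨b, u⟩, hq, hidem, (hu : u = t)⟩
      subst hu
      have h2 : (lsdMul act ((b, u) : K × T) (b, u)).2 = u := congrArg Prod.snd hidem
      have hu_idem : u * u = u := h2
      refine ⟨hu_idem, ?_⟩
      have hp' : act (iran u) a = a := hp
      rw [iran_of_idem hu_idem] at hp'
      exact hp'
    · rintro ⟨he, ha⟩
      refine ⟨hsub ⟨he, ha⟩, (act t (a * a⁻¹), t), ?_, ?_, rfl⟩
      · show act (iran t) (act t (a * a⁻¹)) = act t (a * a⁻¹)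
        rw [iran_of_idem he, ← hcomp, he]
      · have hself : act t (act t (a * a⁻¹)) = act t (a * a⁻¹) := by
          rw [← hcomp, he]
        have hc : (a * a⁻¹) * (a * a⁻¹) = a * a⁻¹ := isg_ran_idem a
        show (act (iran (t * t)) (act t (a * a⁻¹)) * act t (act t (a * a⁻¹)), t * t)
            = (act t (a * a⁻¹), t)
        rw [he, iran_of_idem he, hself, ← hmul, hc]
  · -- 𝕂_e = (e·K) × {e}
    ext ⟨a, e⟩
    constructor
    · rintro ⟨he, ha⟩
      exact ⟨he, a, ha.symm⟩
    · rintro ⟨he, b, hb⟩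
      refine ⟨he, ?_⟩
      rw [hb, ← hcomp, he]
  · -- surjectivity of π₂
    intro t
    obtain ⟨a⟩ := ‹Nonempty K›
    refine ⟨(act (iran t) a, t), ?_, rfl⟩
    show act (iran t) (act (iran t) a) = act (iran t) a
    rw [← hcomp, iran_idem t]
end

section
/- For any inverse semigroups K and T, the action of T on P_{K,T} given by (t·α)(x) = α(xt) with dom(t·α) = (dom α)t⁻¹ satisfies condition (AFR) with respect to the surjective homomorphism ε: P_{K,T} → E(T) sending α to the unique idempotent generator of the principal left ideal dom α: for all α ∈ P_{K,T} and e ∈ E(T), e·α = α if and only if ε(α) ≤ e. Consequently, Houghton's wreath product K Wr^H T coincides with the full restricted semidirect product P_{K,T}⋊T defined by this action and ε. -/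
section Aux

open InverseSemigroup

variable {K T : Type*} [InverseSemigroup T]

lemma PElem.ext'_s18 {α β : PElem K T} (h : α.gen = β.gen)
    (hv : ∀ x h1 h2, α.val ⟨x, h1⟩ = β.val ⟨x, h2⟩) : α = β := by
  obtain ⟨g, hg, v⟩ := α
  obtain ⟨g', hg', v'⟩ := β
  simp only at h
  subst h
  simp only [PElem.mk.injEq, heq_eq_eq, true_and]
  funext x
  exact hv x.1 x.2 x.2

lemma mem_lIdeal_idem {e x : T} (he : e * e = e) :
    x ∈ lIdeal T e ↔ x * e = x := by
  constructor
  · rintro ⟨y, rfl⟩; rw [mul_assoc, he]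
  · intro h; exact ⟨x, h.symm⟩

lemma mem_lIdeal_inv {t x : T} : x ∈ lIdeal T t⁻¹ ↔ x * (t * t⁻¹) = x := by
  constructor
  · rintro ⟨y, rfl⟩
    calc y * t⁻¹ * (t * t⁻¹) = y * (t⁻¹ * t * t⁻¹) := by simp only [mul_assoc]
      _ = y * t⁻¹ := by rw [inv_mul_inv]
  · intro h; exact ⟨x * t, by rw [mul_assoc]; exact h.symm⟩

lemma idem_eq_of_set {e f : T} (he : e * e = e) (hf : f * f = f)
    (h : ∀ x : T, x * e = x ↔ x * f = x) : e = f := by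
  have h1 : e * f = e := (h e).mp he
  have h2 : f * e = f := (h f).mpr hf
  rw [← h1, idem_comm he hf, h2]

lemma conj_gen_mul (t a b : T) (ha : a * a = a) :
    t * (a * b) * t⁻¹ = (t * a * t⁻¹) * (t * b * t⁻¹) := by
  have h1 : a * (t⁻¹ * t) = (t⁻¹ * t) * a := idem_comm ha (dom_idem t)
  calc t * (a * b) * t⁻¹
      = (t * t⁻¹ * t) * (a * b) * t⁻¹ := by rw [mul_inv_mul]
    _ = t * ((t⁻¹ * t * a) * (b * t⁻¹)) := by simp only [mul_assoc]
    _ = t * ((a * (t⁻¹ * t)) * (b * t⁻¹)) := by rw [← h1]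
    _ = (t * a * t⁻¹) * (t * b * t⁻¹) := by simp only [mul_assoc]

end Aux

/-- For inverse semigroups `K`, `T`, the action
`(t·α)(x) = α(xt)` of `T` on `P_{K,T}` satisfies condition (AFR) with respect
to the surjective homomorphism `ε : P_{K,T} → E(T)` sending `α` to the unique
idempotent generator of `dom α`; consequently Houghton's wreath product
`K Wr^H T` coincides with the full restricted semidirect product
`P_{K,T} ⋊ T` defined by this action and `ε` (same carrier and the same
multiplication `(α,t)(β,u) = (α ⊕ (t·β), tu)`). -/
theorem houghton_is_full_restricted_semidirect {K T : Type*}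
    [InverseSemigroup K] [InverseSemigroup T] [Nonempty K] :
    -- `ε = PElem.gen` sends `α` to the unique idempotent generator of `dom α`
    (∀ α : PElem K T, α.gen ∈ idemSet T ∧
        {x : T | x * α.gen = x} = lIdeal T α.gen ∧
        (∀ e ∈ idemSet T, {x : T | x * α.gen = x} = lIdeal T e → e = α.gen)) ∧
    -- `ε` is a surjective homomorphism onto `E(T)`
    (∀ α β : PElem K T, (PElem.pmul α β).gen = α.gen * β.gen) ∧
    (∀ e ∈ idemSet T, ∃ α : PElem K T, α.gen = e) ∧
    -- `pact` is an action of `T` on `P_{K,T}` by endomorphisms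
    (∀ (t : T) (α β : PElem K T),
        PElem.pact t (PElem.pmul α β) =
          PElem.pmul (PElem.pact t α) (PElem.pact t β)) ∧
    (∀ (t u : T) (α : PElem K T),
        PElem.pact (t * u) α = PElem.pact t (PElem.pact u α)) ∧
    -- condition (AFR): `e · α = α` iff `ε α ≤ e`
    (∀ (α : PElem K T), ∀ e ∈ idemSet T,
        (PElem.pact e α = α ↔ nle α.gen e)) ∧
    -- consequently `K Wr^H T` coincides with `P_{K,T} ⋊ T`
    hwrSet K T = {p : PElem K T × T | p.1.gen = iran p.2} := by
  classical
  refine ⟨?_, ?_, ?_, ?_, ?_, ?_, ?_⟩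
  · intro α
    refine ⟨α.idem, ?_, ?_⟩
    · ext x
      simp only [Set.mem_setOf_eq, mem_lIdeal_idem α.idem]
    · intro e he hset
      refine idem_eq_of_set he α.idem fun x => ?_
      have hx : (x ∈ {x : T | x * α.gen = x}) ↔ x ∈ lIdeal T e := by rw [hset]
      rw [mem_lIdeal_idem he] at hx
      exact (hx.symm.trans Iff.rfl)
  · intro α β; rfl
  · intro e he
    exact ⟨⟨e, he, fun _ => Classical.arbitrary K⟩, rfl⟩
  · intro t α β
    refine PElem.ext'_s18 (conj_gen_mul t α.gen β.gen α.idem) ?_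
    intro x h1 h2
    rfl
  · intro t u α
    refine PElem.ext'_s18 ?_ ?_
    · show (t * u) * α.gen * (t * u)⁻¹ = t * (u * α.gen * u⁻¹) * t⁻¹
      rw [InverseSemigroup.mul_inv_rev']
      simp only [mul_assoc]
    · intro x h1 h2
      show α.val ⟨x * (t * u), _⟩ = α.val ⟨x * t * u, _⟩
      exact congrArg α.val (Subtype.ext (mul_assoc x t u).symm)
  · intro α e he
    constructor
    · intro h
      have hg : e * α.gen * e⁻¹ = α.gen := congrArg PElem.gen h
      rw [InverseSemigroup.idem_inv he] at hg
      exact ⟨e * α.gen, InverseSemigroup.idem_mul_idem he α.idem, hg.symm⟩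
    · rintro ⟨f, hf, hgf⟩
      have hge : α.gen * e = α.gen := by
        rw [hgf, mul_assoc, he]
      have heg : e * α.gen = α.gen := by
        rw [InverseSemigroup.idem_comm he α.idem]; exact hge
      refine PElem.ext'_s18 ?_ ?_
      · show e * α.gen * e⁻¹ = α.gen
        rw [InverseSemigroup.idem_inv he, heg, hge]
      · intro x h1 h2
        show α.val ⟨x * e, _⟩ = α.val ⟨x, h2⟩
        refine congrArg α.val (Subtype.ext ?_)
        show x * e = x
        calc x * e = (x * α.gen) * e := by rw [h2]
          _ = x * α.gen := by rw [mul_assoc, hge]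
          _ = x := h2
  · ext ⟨α, t⟩
    simp only [hwrSet, Set.mem_setOf_eq, iran]
    constructor
    · intro h
      refine idem_eq_of_set α.idem (InverseSemigroup.ran_idem t) fun x => ?_
      have : (x ∈ {x : T | x * α.gen = x}) ↔ x ∈ lIdeal T t⁻¹ := by rw [h]
      rwa [Set.mem_setOf_eq, mem_lIdeal_inv] at this
    · intro h
      ext x
      rw [Set.mem_setOf_eq, mem_lIdeal_inv, h]
end
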